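/- (Lemma 3 of the paper: Schur-complement reformulation of the coupling constraint F = BWBᵀ) Let B be a p×n matrix with real entries (viewed as a complex matrix, so Bᴴ = Bᵀ), let W ∈ ℂ^{n×n}, and let F ∈ ℂ^{p×p}. Then F = B W Bᵀ holds if and only if there exist matrices S, T ∈ ℂ^{p×p} such that the (2p+n)×(2p+n) block matrix with block rows [S, F, BW], [Fᴴ, T, B], [WᴴBᵀ, Bᵀ, I_n] is positive semidefinite and Tr(S − B W Wᴴ Bᵀ) ≤ 0. -/

import Mathlib

/-! Move the identity block of the `3 × 3` block matrix to a corner; its Schur complement is then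
`[[S - BWWᴴBᴴ, F - BWBᴴ], [(F - BWBᴴ)ᴴ, T - BBᴴ]]`. A positive semidefinite matrix of nonpositive
trace is zero, and a positive semidefinite matrix with a zero diagonal entry has a zero row, so the
complement forces `F = BWBᴴ`; conversely `S = BWWᴴBᴴ`, `T = BBᴴ` make the complement vanish.
For real `B`, `Bᵀ = Bᴴ`. -/

open Matrix
open scoped ComplexOrder

namespace Matrix

variable {𝕜 : Type*} [RCLike 𝕜]

theorem PosSemidef.apply_eq_zero_of_diag_eq_zero {n : Type*} [Fintype n] [DecidableEq n]
    {A : Matrix n n 𝕜} (hA : A.PosSemidef) {i : n} (hi : A i i = 0) (j : n) : A i j = 0 := by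
  have hcol : A *ᵥ Pi.single i 1 = 0 :=
    (hA.dotProduct_mulVec_zero_iff _).mp (by simp [mulVec_single, hi])
  rw [← hA.isHermitian.apply i j, star_eq_zero]
  simpa [mulVec_single] using congrFun hcol j

theorem PosSemidef.eq_zero_of_trace_nonpos {n : Type*} [Fintype n] {A : Matrix n n 𝕜}
    (hA : A.PosSemidef) (htr : A.trace ≤ 0) : A = 0 :=
  hA.trace_eq_zero_iff.mp (le_antisymm htr hA.trace_nonneg)

theorem PosSemidef.eq_zero_of_fromBlocks_of_trace_nonpos {m n : Type*} [Fintype m] [Fintype n]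
    {A : Matrix m m 𝕜} {C : Matrix m n 𝕜} {D : Matrix n n 𝕜}
    (h : (fromBlocks A C Cᴴ D).PosSemidef) (hA : A.trace ≤ 0) : C = 0 := by
  classical
  have hA0 : A = 0 := (h.submatrix Sum.inl).eq_zero_of_trace_nonpos hA
  subst hA0
  ext i j
  exact h.apply_eq_zero_of_diag_eq_zero (i := Sum.inl i) rfl (Sum.inr j)

theorem fromBlocks_submatrix_sumAssoc {α l₁ l₂ l₃ m₁ m₂ m₃ : Type*}
    (A : Matrix l₁ m₁ α) (B₁ : Matrix l₁ m₂ α) (B₂ : Matrix l₁ m₃ α)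
    (C₁ : Matrix l₂ m₁ α) (C₂ : Matrix l₃ m₁ α)
    (D₁₁ : Matrix l₂ m₂ α) (D₁₂ : Matrix l₂ m₃ α) (D₂₁ : Matrix l₃ m₂ α) (D₂₂ : Matrix l₃ m₃ α) :
    (fromBlocks A (fromCols B₁ B₂) (fromRows C₁ C₂) (fromBlocks D₁₁ D₁₂ D₂₁ D₂₂)).submatrix
        (Equiv.sumAssoc l₁ l₂ l₃) (Equiv.sumAssoc m₁ m₂ m₃) =
      fromBlocks (fromBlocks A B₁ C₁ D₁₁) (fromRows B₂ D₁₂) (fromCols C₂ D₂₁) D₂₂ := by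
  ext ((i | i) | i) ((j | j) | j) <;> rfl

theorem posSemidef_fromBlocks_fromBlocks_one_iff {m₁ m₂ n : Type*}
    [Fintype m₁] [Fintype m₂] [Fintype n] [DecidableEq n]
    (S : Matrix m₁ m₁ 𝕜) (F : Matrix m₁ m₂ 𝕜) (T : Matrix m₂ m₂ 𝕜)
    (X : Matrix m₁ n 𝕜) (Y : Matrix m₂ n 𝕜) :
    (fromBlocks S (fromCols F X) (fromRows Fᴴ Xᴴ) (fromBlocks T Y Yᴴ 1)).PosSemidef ↔
      (fromBlocks (S - X * Xᴴ) (F - X * Yᴴ) (F - X * Yᴴ)ᴴ (T - Y * Yᴴ)).PosSemidef := by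
  let : Invertible (1 : Matrix n n 𝕜) := invertibleOne
  rw [← posSemidef_submatrix_equiv (Equiv.sumAssoc m₁ m₂ n), fromBlocks_submatrix_sumAssoc,
    ← conjTranspose_fromRows_eq_fromCols_conjTranspose, PosDef.fromBlocks₂₂ _ _ PosDef.one,
    inv_one, Matrix.mul_one, conjTranspose_fromRows_eq_fromCols_conjTranspose, fromRows_mul,
    mul_fromCols, mul_fromCols, fromRows_fromCols_eq_fromBlocks]
  simp only [sub_eq_add_neg, fromBlocks_neg, fromBlocks_add, conjTranspose_add, conjTranspose_neg,
    conjTranspose_mul, conjTranspose_conjTranspose]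

theorem eq_mul_mul_conjTranspose_iff_exists_posSemidef {m n : Type*}
    [Fintype m] [Fintype n] [DecidableEq n]
    (B : Matrix m n 𝕜) (W : Matrix n n 𝕜) (F : Matrix m m 𝕜) :
    F = B * W * Bᴴ ↔
      ∃ S T : Matrix m m 𝕜,
        (fromBlocks S (fromCols F (B * W)) (fromRows Fᴴ (Wᴴ * Bᴴ))
          (fromBlocks T B Bᴴ 1)).PosSemidef ∧
        (S - B * W * Wᴴ * Bᴴ).trace ≤ 0 := by
  have hBW : B * W * (B * W)ᴴ = B * W * Wᴴ * Bᴴ := by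
    rw [conjTranspose_mul, ← Matrix.mul_assoc]
  simp_rw [← conjTranspose_mul, posSemidef_fromBlocks_fromBlocks_one_iff, hBW]
  constructor
  · rintro rfl
    refine ⟨B * W * Wᴴ * Bᴴ, B * Bᴴ, ?_, by simp⟩
    simpa using PosSemidef.zero
  · rintro ⟨S, T, hM, htr⟩
    exact sub_eq_zero.mp (hM.eq_zero_of_fromBlocks_of_trace_nonpos htr)

theorem conjTranspose_map_ofReal {m n : Type*} (B : Matrix m n ℝ) :
    (B.map Complex.ofReal)ᴴ = (B.map Complex.ofReal)ᵀ := by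
  ext i j
  simp [Complex.conj_ofReal]

end Matrix

/-- Lemma 3 of the paper: Schur-complement reformulation of the coupling
constraint F = B W Bᵀ. -/
theorem schur_coupling_constraint {p n : ℕ}
    (B : Matrix (Fin p) (Fin n) ℝ)
    (W : Matrix (Fin n) (Fin n) ℂ)
    (F : Matrix (Fin p) (Fin p) ℂ) :
    F = B.map Complex.ofReal * W * (B.map Complex.ofReal)ᵀ ↔
      ∃ S T : Matrix (Fin p) (Fin p) ℂ,
        (fromBlocks S
            (fromCols F (B.map Complex.ofReal * W))
            (fromRows Fᴴ (Wᴴ * (B.map Complex.ofReal)ᵀ))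
            (fromBlocks T (B.map Complex.ofReal) (B.map Complex.ofReal)ᵀ
              (1 : Matrix (Fin n) (Fin n) ℂ))).PosSemidef ∧
        (S - B.map Complex.ofReal * W * Wᴴ * (B.map Complex.ofReal)ᵀ).trace ≤ 0 := by
  rw [← conjTranspose_map_ofReal]
  exact eq_mul_mul_conjTranspose_iff_exists_posSemidef _ W F
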